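/- Let f : ℝ^d → ℝ be L-smooth, satisfy the PL condition (1/2)‖∇f(x)‖² ≥ μ(f(x) - f*) where f* = inf f > -∞, and suppose x_{t+1} = x_t - α v_t with 0 < α ≤ 1/(2L). Then f(x_{t+1}) - f* ≤ (1 - αμ/2)(f(x_t) - f*) - (α/4)‖v_t‖² + α‖v_t - ∇f(x_t)‖². -/

import Mathlib

/-!
Smoothness gives the quadratic upper bound
`f (x - α v) ≤ f x - α ⟪∇f x, v⟫ + L α² / 2 ‖v‖²`, and `α L ≤ 1/2` turns the last term into
`α/4 ‖v‖²`. Polarising `⟪∇f x, v⟫` through the error `v - ∇f x` leaves a `-α/2 ‖∇f x‖²`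
term, half of which the PL inequality converts into the contraction `-α μ/2 (f x - f*)`.
-/

open InnerProductSpace

section Descent

variable {E : Type*} [NormedAddCommGroup E] [InnerProductSpace ℝ E] [CompleteSpace E]
  {f : E → ℝ} {L : ℝ}

theorem hasDerivAt_comp_add_smul (hf : Differentiable ℝ f) (x w : E) (t : ℝ) :
    HasDerivAt (fun s : ℝ => f (x + s • w)) ⟪gradient f (x + t • w), w⟫_ℝ t := by
  have hline : HasDerivAt (fun s : ℝ => x + s • w) w t := by
    simpa using ((hasDerivAt_id t).smul_const w).const_add x
  exact ((hf _).hasGradientAt.hasFDerivAt.comp_hasDerivAt t hline).congr_deriv (by simp)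

/-- The descent lemma. -/
theorem le_add_inner_gradient_add_sq_of_lipschitz_gradient (hf : Differentiable ℝ f)
    (hlip : ∀ x y, ‖gradient f x - gradient f y‖ ≤ L * ‖x - y‖) (x y : E) :
    f y ≤ f x + ⟪gradient f x, y - x⟫_ℝ + L / 2 * ‖y - x‖ ^ 2 := by
  set w := y - x
  set ψ : ℝ → ℝ := fun t => f (x + t • w) - L / 2 * ‖w‖ ^ 2 * t ^ 2
  have hψ : ∀ t : ℝ, HasDerivAt ψ (⟪gradient f (x + t • w), w⟫_ℝ - L * ‖w‖ ^ 2 * t) t := by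
    intro t
    refine ((hasDerivAt_comp_add_smul hf x w t).sub
      ((hasDerivAt_pow 2 t).const_mul (L / 2 * ‖w‖ ^ 2))).congr_deriv ?_
    norm_num
    ring
  have hψ_le : ∀ t ∈ interior (Set.Ici (0 : ℝ)), deriv ψ t ≤ ⟪gradient f x, w⟫_ℝ := by
    intro t ht
    rw [interior_Ici, Set.mem_Ioi] at ht
    have hgrad : ⟪gradient f (x + t • w) - gradient f x, w⟫_ℝ ≤ L * ‖w‖ ^ 2 * t :=
      calc ⟪gradient f (x + t • w) - gradient f x, w⟫_ℝ
          ≤ ‖gradient f (x + t • w) - gradient f x‖ * ‖w‖ := real_inner_le_norm _ _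
        _ ≤ L * ‖t • w‖ * ‖w‖ := by
          simpa using mul_le_mul_of_nonneg_right (hlip (x + t • w) x) (norm_nonneg w)
        _ = L * ‖w‖ ^ 2 * t := by rw [norm_smul, Real.norm_of_nonneg ht.le]; ring
    rw [(hψ t).deriv]
    linarith [inner_sub_left (𝕜 := ℝ) (gradient f (x + t • w)) (gradient f x) w]
  have h01 := (convex_Ici (0 : ℝ)).image_sub_le_mul_sub_of_deriv_le
    (fun t _ => (hψ t).continuousAt.continuousWithinAt)
    (fun t _ => (hψ t).differentiableAt.differentiableWithinAt) hψ_le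
    0 Set.self_mem_Ici 1 (Set.mem_Ici.2 zero_le_one) zero_le_one
  simp only [ψ, one_smul, zero_smul, add_zero, w, add_sub_cancel] at h01
  linarith

theorem image_sub_smul_le_of_lipschitz_gradient (hf : Differentiable ℝ f)
    (hlip : ∀ x y, ‖gradient f x - gradient f y‖ ≤ L * ‖x - y‖) {α : ℝ} (hα0 : 0 ≤ α)
    (hαL : α * L ≤ 1 / 2) (x v : E) :
    f (x - α • v) ≤ f x - α / 2 * ‖gradient f x‖ ^ 2 - α / 4 * ‖v‖ ^ 2
      + α / 2 * ‖v - gradient f x‖ ^ 2 := by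
  have hdesc := le_add_inner_gradient_add_sq_of_lipschitz_gradient hf hlip x (x - α • v)
  rw [sub_sub_cancel_left, inner_neg_right, real_inner_smul_right, norm_neg, norm_smul,
    Real.norm_of_nonneg hα0] at hdesc
  have hpolar : α * ⟪gradient f x, v⟫_ℝ
      = α / 2 * (‖gradient f x‖ ^ 2 + ‖v‖ ^ 2 - ‖v - gradient f x‖ ^ 2) := by
    rw [norm_sub_sq_real, real_inner_comm]
    ring
  have hquad : L / 2 * (α * ‖v‖) ^ 2 ≤ α / 4 * ‖v‖ ^ 2 := by
    have := mul_le_mul_of_nonneg_right (mul_le_mul_of_nonneg_left hαL hα0) (sq_nonneg ‖v‖)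
    linarith
  linarith

end Descent

theorem stmt_2_general {d : ℕ} (f : EuclideanSpace ℝ (Fin d) → ℝ) (L μ : ℝ)
    (hdiff : Differentiable ℝ f)
    (hlip : ∀ x y, ‖gradient f x - gradient f y‖ ≤ L * ‖x - y‖)
    (fstar : ℝ)
    (hPL : ∀ x, (1 / 2) * ‖gradient f x‖ ^ 2 ≥ μ * (f x - fstar))
    (α : ℝ) (hα0 : 0 < α) (hα : α ≤ 1 / (2 * L))
    (x v : EuclideanSpace ℝ (Fin d)) :
    f (x - α • v) - fstar ≤ (1 - α * μ / 2) * (f x - fstar)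
      - α / 4 * ‖v‖ ^ 2 + α * ‖v - gradient f x‖ ^ 2 := by
  have hL : 0 < L := by
    by_contra! hL
    have : 1 / (2 * L) ≤ 0 := div_nonpos_of_nonneg_of_nonpos zero_le_one (by linarith)
    linarith
  have hαL : α * L ≤ 1 / 2 := by
    rw [le_div_iff₀ (by positivity)] at hα
    linarith
  have hstep := image_sub_smul_le_of_lipschitz_gradient hdiff hlip hα0.le hαL x v
  have hPL_x : α * μ / 2 * (f x - fstar) ≤ α / 4 * ‖gradient f x‖ ^ 2 := by
    linarith [mul_le_mul_of_nonneg_left (hPL x) (half_pos hα0).le]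
  linarith [mul_nonneg hα0.le (sq_nonneg ‖gradient f x‖),
    mul_nonneg hα0.le (sq_nonneg ‖v - gradient f x‖)]

/-- Descent lemma under the PL condition: one-step linear contraction of the
optimality gap, up to gradient-estimation error. -/
theorem stmt_2 {d : ℕ} (f : EuclideanSpace ℝ (Fin d) → ℝ) (L μ : ℝ)
    (hL : 0 < L) (hμ : 0 < μ)
    (hdiff : Differentiable ℝ f)
    (hlip : ∀ x y, ‖gradient f x - gradient f y‖ ≤ L * ‖x - y‖)
    (hbdd : BddBelow (Set.range f))
    (fstar : ℝ) (hfstar : fstar = ⨅ x, f x)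
    (hPL : ∀ x, (1 / 2) * ‖gradient f x‖ ^ 2 ≥ μ * (f x - fstar))
    (α : ℝ) (hα0 : 0 < α) (hα : α ≤ 1 / (2 * L))
    (x v : EuclideanSpace ℝ (Fin d)) :
    f (x - α • v) - fstar ≤ (1 - α * μ / 2) * (f x - fstar)
      - α / 4 * ‖v‖ ^ 2 + α * ‖v - gradient f x‖ ^ 2 :=
  stmt_2_general f L μ hdiff hlip fstar hPL α hα0 hα x v
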